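/- arXiv:2411.15817 — 2 statements merged into one kernel-verified Lean document; each statement's English description precedes it below -/
import Mathlib

section
/- For all λ, λ₁, μ, μ₁ > 0, the quantity μ₁ log(λ/λ₁) + μ(λ₁/λ − 1) + log(Γ(μ₁)/Γ(μ)) + (μ − μ₁)ψ(μ) is nonnegative, and it equals zero if and only if λ = λ₁ and μ = μ₁. -/
/-!
With `r = μ λ₁ / (μ₁ λ)` and `F(t) = log Γ(t) - t log t + t`, the divergence splits as
`μ₁ (r - 1 - log r)` plus the Bregman divergence `F(μ₁) - F(μ) - F'(μ) (μ₁ - μ)`, and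
`F' = ψ - log`. The first term is nonnegative and vanishes only at `r = 1`. For the second, `F` is
strictly convex: by `ψ(x + 1) = ψ(x) + 1/x`, the function `ψ - log` increases from `x` to `x + 1` by
`1/x - log (1 + 1/x)`, which is strictly decreasing in `x`, and `ψ - log → 0` at infinity because
the convexity of `log Γ` gives `ψ(x) ≤ log x ≤ ψ(x + 1)`. Telescoping shows `ψ - log` is strictly
increasing.
-/

/-- Digamma `ψ(z) = Γ'(z)/Γ(z)`. -/
noncomputable def digamma (z : ℝ) : ℝ := deriv Real.Gamma z / Real.Gamma z

open Real Set Filter Topology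

theorem StrictConvexOn.add_mul_sub_lt_of_hasDerivAt {S : Set ℝ} {f : ℝ → ℝ} {x y f' : ℝ}
    (hf : StrictConvexOn ℝ S f) (hx : x ∈ S) (hy : y ∈ S) (hyx : y ≠ x)
    (hf' : HasDerivAt f f' x) : f x + f' * (y - x) < f y := by
  rcases hyx.lt_or_gt with hlt | hgt
  · have h := hf.slope_lt_of_hasDerivAt hy hx hlt hf'
    rw [slope_def_field, div_lt_iff₀ (sub_pos.2 hlt)] at h
    linarith
  · have h := hf.lt_slope_of_hasDerivAt hx hy hgt hf'
    rw [slope_def_field, lt_div_iff₀ (sub_pos.2 hgt)] at h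
    linarith

lemma sub_log_one_add_lt_sub_log_one_add {u v : ℝ} (hu : 0 ≤ u) (huv : u < v) :
    u - log (1 + u) < v - log (1 + v) := by
  have hu1 : 0 < 1 + u := by linarith
  have hv1 : 0 < 1 + v := by linarith
  have hlog := log_lt_sub_one_of_pos (div_pos hv1 hu1)
    (by rw [Ne, div_eq_one_iff_eq hu1.ne']; linarith)
  rw [log_div hv1.ne' hu1.ne'] at hlog
  have hle : (1 + v) / (1 + u) - 1 ≤ v - u := by
    rw [div_sub_one hu1.ne', div_le_iff₀ hu1]
    nlinarith
  linarith

lemma inv_sub_log_one_add_inv_lt {a b : ℝ} (ha : 0 < a) (hab : a < b) :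
    b⁻¹ - log (1 + b⁻¹) < a⁻¹ - log (1 + a⁻¹) :=
  sub_log_one_add_lt_sub_log_one_add (inv_pos.2 (ha.trans hab)).le (inv_strictAnti₀ ha hab)

section Digamma

variable {x : ℝ}

lemma hasDerivAt_log_Gamma (hx : 0 < x) : HasDerivAt (fun t => log (Gamma t)) (digamma x) x :=
  ((differentiableOn_Gamma_Ioi x hx).differentiableAt (Ioi_mem_nhds hx)).hasDerivAt.log
    (Gamma_pos_of_pos hx).ne'

lemma log_Gamma_add_one (hx : 0 < x) : log (Gamma (x + 1)) = log x + log (Gamma x) := by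
  rw [Gamma_add_one hx.ne', log_mul hx.ne' (Gamma_pos_of_pos hx).ne']

lemma digamma_add_one (hx : 0 < x) : digamma (x + 1) = digamma x + x⁻¹ := by
  have hshift : (fun t => log (Gamma (t + 1))) =ᶠ[𝓝 x] fun t => log t + log (Gamma t) := by
    filter_upwards [Ioi_mem_nhds hx] with t ht using log_Gamma_add_one ht
  have h := ((hasDerivAt_log hx.ne').add (hasDerivAt_log_Gamma hx)).congr_of_eventuallyEq hshift
  have := ((hasDerivAt_log_Gamma (by linarith : 0 < x + 1)).comp_add_const x 1).unique h
  linarith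

lemma slope_log_Gamma_add_one (hx : 0 < x) : slope (log ∘ Gamma) x (x + 1) = log x := by
  rw [slope_def_field, Function.comp_apply, Function.comp_apply, log_Gamma_add_one hx,
    add_sub_cancel_left, add_sub_cancel_right, div_one]

lemma digamma_le_log (hx : 0 < x) : digamma x ≤ log x :=
  slope_log_Gamma_add_one hx ▸ convexOn_log_Gamma.le_slope_of_hasDerivAt hx
    (mem_Ioi.2 (by linarith)) (lt_add_one x) (hasDerivAt_log_Gamma hx)

lemma log_le_digamma_add_one (hx : 0 < x) : log x ≤ digamma (x + 1) :=
  slope_log_Gamma_add_one hx ▸ convexOn_log_Gamma.slope_le_of_hasDerivAt hx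
    (mem_Ioi.2 (by linarith)) (lt_add_one x) (hasDerivAt_log_Gamma (by linarith))

lemma tendsto_digamma_sub_log_atTop :
    Tendsto (fun x => digamma x - log x) atTop (𝓝 0) := by
  have hlower : Tendsto (fun x : ℝ => log (1 - x⁻¹)) atTop (𝓝 0) := by
    have h : Tendsto (fun x : ℝ => 1 - x⁻¹) atTop (𝓝 1) := by
      simpa using tendsto_inv_atTop_zero.const_sub (1 : ℝ)
    have hlog := (continuousAt_log one_ne_zero).tendsto.comp h
    rwa [log_one] at hlog
  refine tendsto_of_tendsto_of_tendsto_of_le_of_le' hlower tendsto_const_nhds ?_ ?_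
  · filter_upwards [eventually_gt_atTop 1] with x hx
    have h := log_le_digamma_add_one (by linarith : 0 < x - 1)
    rw [sub_add_cancel] at h
    have hx0 : 0 < x := by linarith
    rw [show 1 - x⁻¹ = (x - 1) / x by field_simp, log_div (by linarith) hx0.ne']
    linarith
  · filter_upwards [eventually_gt_atTop 0] with x hx
    linarith [digamma_le_log hx]

lemma digamma_sub_log_add_one (hx : 0 < x) :
    digamma (x + 1) - log (x + 1) = digamma x - log x + (x⁻¹ - log (1 + x⁻¹)) := by
  have : x + 1 = x * (1 + x⁻¹) := by field_simp
  rw [digamma_add_one hx, this, log_mul hx.ne' (by positivity)]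
  ring

lemma digamma_sub_log_add_nat (hx : 0 < x) (n : ℕ) :
    digamma (x + n) - log (x + n) =
      digamma x - log x + ∑ k ∈ Finset.range n, ((x + k)⁻¹ - log (1 + (x + k)⁻¹)) := by
  induction n with
  | zero => simp
  | succ n ih =>
    rw [Nat.cast_succ, ← add_assoc, digamma_sub_log_add_one (by positivity), ih,
      Finset.sum_range_succ]
    ring

end Digamma

theorem strictMonoOn_digamma_sub_log :
    StrictMonoOn (fun x => digamma x - log x) (Ioi 0) := by
  intro a (ha : 0 < a) b (hb : 0 < b) hab
  let φ : ℝ → ℝ := fun x => digamma x - log x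
  let δ : ℝ → ℝ := fun x => x⁻¹ - log (1 + x⁻¹)
  have hφ : ∀ x, 0 < x → ∀ n : ℕ, φ (x + n) = φ x + ∑ k ∈ Finset.range n, δ (x + k) :=
    fun x hx n => digamma_sub_log_add_nat hx n
  have htail : ∀ n : ℕ, φ (b + (n + 1 : ℕ)) - φ (a + (n + 1 : ℕ)) ≤ φ b - φ a - (δ a - δ b) := by
    intro n
    have hsum : ∑ k ∈ Finset.range n, (δ (b + (k + 1 : ℕ)) - δ (a + (k + 1 : ℕ))) ≤ 0 :=
      Finset.sum_nonpos fun k _ => sub_nonpos.2 (inv_sub_log_one_add_inv_lt (by positivity)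
        (by linarith)).le
    rw [Finset.sum_sub_distrib] at hsum
    rw [hφ b hb, hφ a ha, Finset.sum_range_succ', Finset.sum_range_succ', Nat.cast_zero,
      add_zero, add_zero]
    linarith
  have hlim : Tendsto (fun n : ℕ => φ (b + (n + 1 : ℕ)) - φ (a + (n + 1 : ℕ))) atTop (𝓝 0) := by
    have hshift : ∀ c : ℝ, Tendsto (fun n : ℕ => c + (n + 1 : ℕ)) atTop atTop := fun c =>
      tendsto_atTop_add_const_left _ c
        (tendsto_natCast_atTop_atTop.comp (tendsto_add_atTop_nat 1))
    simpa using (tendsto_digamma_sub_log_atTop.comp (hshift b)).sub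
      (tendsto_digamma_sub_log_atTop.comp (hshift a))
  have hgap := inv_sub_log_one_add_inv_lt ha hab
  have hlimit := le_of_tendsto' hlim htail
  simp only [φ, δ] at hlimit ⊢
  linarith

noncomputable def klGammaPotential (t : ℝ) : ℝ := log (Gamma t) - t * log t + t

lemma hasDerivAt_klGammaPotential {t : ℝ} (ht : 0 < t) :
    HasDerivAt klGammaPotential (digamma t - log t) t :=
  (((hasDerivAt_log_Gamma ht).sub (hasDerivAt_mul_log ht.ne')).add (hasDerivAt_id t)).congr_deriv
    (by ring)

theorem strictConvexOn_klGammaPotential : StrictConvexOn ℝ (Ioi 0) klGammaPotential := by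
  refine StrictMonoOn.strictConvexOn_of_deriv (convex_Ioi 0)
    (fun t ht => (hasDerivAt_klGammaPotential ht).continuousAt.continuousWithinAt) ?_
  rw [interior_Ioi]
  exact strictMonoOn_digamma_sub_log.congr fun t ht =>
    (hasDerivAt_klGammaPotential ht).deriv.symm

lemma kl_gamma_eq_ratio_add_bregman {l l₁ μ μ₁ : ℝ} (hl : 0 < l) (hl₁ : 0 < l₁) (hμ : 0 < μ)
    (hμ₁ : 0 < μ₁) :
    μ₁ * log (l / l₁) + μ * (l₁ / l - 1) + log (Gamma μ₁ / Gamma μ) + (μ - μ₁) * digamma μ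
      = μ₁ * (μ * l₁ / (μ₁ * l) - 1 - log (μ * l₁ / (μ₁ * l)))
        + (klGammaPotential μ₁
          - (klGammaPotential μ + (digamma μ - log μ) * (μ₁ - μ))) := by
  rw [klGammaPotential, klGammaPotential,
    log_div (Gamma_pos_of_pos hμ₁).ne' (Gamma_pos_of_pos hμ).ne', log_div hl.ne' hl₁.ne',
    log_div (by positivity) (by positivity), log_mul hμ.ne' hl₁.ne', log_mul hμ₁.ne' hl.ne']
  field_simp
  ring

/-- KL divergence between two gamma distributions is nonnegative,
and vanishes iff the parameters coincide. -/
theorem kl_gamma_nonneg (l l₁ μ μ₁ : ℝ) (hl : 0 < l) (hl₁ : 0 < l₁)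
    (hμ : 0 < μ) (hμ₁ : 0 < μ₁) :
    0 ≤ μ₁ * Real.log (l / l₁) + μ * (l₁ / l - 1)
        + Real.log (Real.Gamma μ₁ / Real.Gamma μ) + (μ - μ₁) * digamma μ ∧
      (μ₁ * Real.log (l / l₁) + μ * (l₁ / l - 1)
        + Real.log (Real.Gamma μ₁ / Real.Gamma μ) + (μ - μ₁) * digamma μ = 0
        ↔ l = l₁ ∧ μ = μ₁) := by
  rw [kl_gamma_eq_ratio_add_bregman hl hl₁ hμ hμ₁]
  set r := μ * l₁ / (μ₁ * l)
  have hr : 0 < r := by positivity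
  have hratio : 0 ≤ r - 1 - log r := by linarith [log_le_sub_one_of_pos hr]
  have htangent (hne : μ₁ ≠ μ) :
      klGammaPotential μ + (digamma μ - log μ) * (μ₁ - μ) < klGammaPotential μ₁ :=
    strictConvexOn_klGammaPotential.add_mul_sub_lt_of_hasDerivAt hμ hμ₁ hne
      (hasDerivAt_klGammaPotential hμ)
  have hbregman : 0 ≤ klGammaPotential μ₁
      - (klGammaPotential μ + (digamma μ - log μ) * (μ₁ - μ)) := by
    rcases eq_or_ne μ₁ μ with rfl | hne
    · simp
    · linarith [htangent hne]
  refine ⟨by positivity, fun hzero => ?_, ?_⟩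
  · have hμeq : μ₁ = μ := by
      by_contra hne
      nlinarith [htangent hne]
    have hr1 : r = 1 := by
      by_contra hne
      nlinarith [log_lt_sub_one_of_pos hr hne]
    refine ⟨?_, hμeq.symm⟩
    rw [show r = μ * l₁ / (μ₁ * l) from rfl, hμeq, mul_div_mul_left _ _ hμ.ne',
      div_eq_one_iff_eq hl.ne'] at hr1
    exact hr1.symm
  · rintro ⟨rfl, rfl⟩
    simp [show r = 1 from div_self (by positivity)]
end

section
/- The Shannon entropy of the Poisson distribution with parameter λ, H(λ) = e^{−λ} Σ_{i=0}^∞ (λ^i/i!) log(i!) − λ log λ + λ, is strictly increasing in λ on (0, ∞). -/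
/-!
Differentiating the exponential generating function shifts its coefficients, and
`log (i+1)! - log i! = log (i+1)`, so `H'(λ) = E log (N+1) - log λ` for `N ~ Poisson(λ)`.
By `log y ≤ y - 1` at `y = λ/(N+1)`, this is at least `1 - E[λ/(N+1)] = e^{-λ} > 0`.
-/

open Real Set
open scoped Nat

noncomputable def egf (c : ℕ → ℝ) (x : ℝ) : ℝ := ∑' i, x ^ i / i ! * c i

section Egf

variable {c : ℕ → ℝ} {K C : ℝ}

lemma norm_pow_div_factorial_mul_le (hc : ∀ i, |c i| ≤ K * C ^ i) {y R : ℝ} (hy : |y| ≤ R)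
    (i : ℕ) : ‖y ^ i / i ! * c i‖ ≤ |K| * ((R * |C|) ^ i / i !) := by
  have hc' : |c i| ≤ |K| * |C| ^ i := by
    simpa only [abs_mul, abs_pow] using (hc i).trans (le_abs_self _)
  have hR : 0 ≤ R := (abs_nonneg y).trans hy
  rw [Real.norm_eq_abs, abs_mul, abs_div, abs_pow, Nat.abs_cast]
  calc |y| ^ i / i ! * |c i| ≤ R ^ i / i ! * (|K| * |C| ^ i) := by gcongr
    _ = |K| * ((R * |C|) ^ i / i !) := by ring

lemma summable_egf (hc : ∀ i, |c i| ≤ K * C ^ i) (x : ℝ) :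
    Summable fun i ↦ x ^ i / i ! * c i :=
  .of_norm_bounded ((summable_pow_div_factorial _).mul_left _)
    (norm_pow_div_factorial_mul_le hc le_rfl)

lemma egf_sub {d : ℕ → ℝ} {K' C' : ℝ} (hc : ∀ i, |c i| ≤ K * C ^ i)
    (hd : ∀ i, |d i| ≤ K' * C' ^ i) (x : ℝ) : egf c x - egf d x = egf (c - d) x := by
  simp only [egf, ← (summable_egf hc x).tsum_sub (summable_egf hd x), Pi.sub_apply, mul_sub]

lemma hasDerivAt_egf (hc : ∀ i, |c i| ≤ K * C ^ i) (x : ℝ) :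
    HasDerivAt (egf c) (egf (fun i ↦ c (i + 1)) x) x := by
  have hc_succ : ∀ i, |c (i + 1)| ≤ K * C * C ^ i := fun i ↦ (hc (i + 1)).trans_eq (by ring)
  -- Splitting off the constant term makes the termwise derivatives exactly the shifted series.
  have hsplit : egf c = fun y ↦ c 0 + ∑' i, y ^ (i + 1) / (i + 1)! * c (i + 1) := by
    funext y; simp [egf, (summable_egf hc y).tsum_eq_zero_add]
  rw [hsplit]
  refine .const_add _ (hasDerivAt_tsum_of_isPreconnected (g' := fun i y ↦ y ^ i / i ! * c (i + 1))
    ((summable_pow_div_factorial ((|x| + 1) * |C|)).mul_left |K * C|)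
    Metric.isOpen_ball (convex_ball 0 (|x| + 1)).isPreconnected (fun i y _ ↦ ?_)
    (fun i y hy ↦ norm_pow_div_factorial_mul_le hc_succ ?_ i) (Metric.mem_ball_self ?_)
    (by simp) ?_)
  · refine (((hasDerivAt_pow (i + 1) y).div_const ((i + 1)! : ℝ)).mul_const
      (c (i + 1))).congr_deriv ?_
    rw [Nat.factorial_succ]; push_cast; field_simp
  · exact (mem_ball_zero_iff.mp hy).le
  · positivity
  · simp

end Egf

lemma pow_succ_div_factorial_succ (x : ℝ) (i : ℕ) :
    x ^ (i + 1) / (i + 1)! = x ^ i / i ! * (x / (i + 1)) := by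
  rw [Nat.factorial_succ]; push_cast; field_simp; ring

lemma hasSum_pow_div_factorial (x : ℝ) : HasSum (fun i ↦ x ^ i / i !) (exp x) :=
  exp_eq_exp_ℝ ▸ NormedSpace.expSeries_div_hasSum_exp x

lemma abs_log_factorial_le (n : ℕ) : |log (n ! : ℝ)| ≤ 4 ^ n := by
  have hn : (n : ℝ) ≤ 2 ^ n := mod_cast n.lt_two_pow_self.le
  rw [abs_of_nonneg (log_nonneg (mod_cast n.factorial_pos))]
  calc log (n ! : ℝ) ≤ log ((n : ℝ) ^ n) :=
        log_le_log (mod_cast n.factorial_pos) (mod_cast n.factorial_le_pow)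
    _ = n * log n := log_pow n n
    _ ≤ 2 ^ n * 2 ^ n := by gcongr; exact (log_le_self n.cast_nonneg).trans hn
    _ = 4 ^ n := by rw [← mul_pow]; norm_num

lemma abs_log_succ_le (n : ℕ) : |log (n + 1 : ℝ)| ≤ 2 ^ n := by
  have hn : (n : ℝ) ≤ 2 ^ n := mod_cast n.lt_two_pow_self.le
  rw [abs_of_nonneg (log_nonneg (by simp))]
  linarith [log_le_sub_one_of_pos (n.cast_add_one_pos (α := ℝ))]

lemma exp_mul_log_add_one_le_egf_log_succ {x : ℝ} (hx : 0 < x) :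
    exp x * log x + 1 ≤ egf (fun i ↦ log (i + 1 : ℝ)) x := by
  have hterm : ∀ i : ℕ, x ^ i / i ! * (log x + 1) - x ^ (i + 1) / (i + 1)!
      ≤ x ^ i / i ! * log (i + 1 : ℝ) := fun i ↦ by
    have hi : (0 : ℝ) < i + 1 := i.cast_add_one_pos
    have hlog := log_le_sub_one_of_pos (div_pos hx hi)
    rw [log_div hx.ne' hi.ne'] at hlog
    rw [pow_succ_div_factorial_succ, ← mul_sub]
    gcongr
    linarith
  have hsum : HasSum (fun i : ℕ ↦ x ^ i / i ! * (log x + 1) - x ^ (i + 1) / (i + 1)!)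
      (exp x * (log x + 1) - (exp x - 1)) := by
    refine ((hasSum_pow_div_factorial x).mul_right _).sub ?_
    simpa using (hasSum_nat_add_iff' 1).mpr (hasSum_pow_div_factorial x)
  have hgrowth : ∀ i : ℕ, |log (i + 1 : ℝ)| ≤ 1 * 2 ^ i := fun i ↦
    (abs_log_succ_le i).trans_eq (one_mul _).symm
  have h := hasSum_le hterm hsum (summable_egf hgrowth x).hasSum
  rw [egf]
  linarith

lemma log_factorial_succ_sub (n : ℕ) : log ((n + 1)! : ℝ) - log (n ! : ℝ) = log (n + 1 : ℝ) := by
  rw [Nat.factorial_succ, Nat.cast_mul, log_mul (by positivity) (by positivity)]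
  push_cast
  ring

noncomputable def poissonEntropy (l : ℝ) : ℝ :=
  exp (-l) * egf (fun i ↦ log (i ! : ℝ)) l - l * log l + l

lemma hasDerivAt_poissonEntropy {x : ℝ} (hx : x ≠ 0) :
    HasDerivAt poissonEntropy (exp (-x) * egf (fun i ↦ log (i + 1 : ℝ)) x - log x) x := by
  have hc : ∀ i, |log (i ! : ℝ)| ≤ 1 * 4 ^ i := fun i ↦
    (abs_log_factorial_le i).trans_eq (one_mul _).symm
  have hc_succ : ∀ i, |log ((i + 1)! : ℝ)| ≤ 4 * 4 ^ i := fun i ↦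
    (abs_log_factorial_le (i + 1)).trans_eq (pow_succ' 4 i)
  have hdiff : egf (fun i ↦ log ((i + 1)! : ℝ)) x - egf (fun i ↦ log (i ! : ℝ)) x
      = egf (fun i ↦ log (i + 1 : ℝ)) x := by
    rw [egf_sub hc_succ hc]
    congr 1
    funext i
    exact log_factorial_succ_sub i
  have h := (((hasDerivAt_neg x).exp.mul (hasDerivAt_egf hc x)).sub
    (hasDerivAt_mul_log hx)).add (hasDerivAt_id x)
  refine h.congr_deriv ?_
  rw [← hdiff]
  ring

/-- The Shannon entropy of the Poisson distribution,
`H(λ) = e^{−λ} Σ_{i≥0} (λ^i/i!) log(i!) − λ log λ + λ`,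
is strictly increasing in `λ` on `(0,∞)`. -/
theorem poisson_entropy_strictMono :
    StrictMonoOn
      (fun l : ℝ =>
        Real.exp (-l) * (∑' i : ℕ, l ^ i / (Nat.factorial i) * Real.log (Nat.factorial i))
          - l * Real.log l + l)
      (Set.Ioi 0) := by
  change StrictMonoOn poissonEntropy (Ioi 0)
  refine strictMonoOn_of_deriv_pos (convex_Ioi 0)
    (fun x hx ↦ (hasDerivAt_poissonEntropy (ne_of_gt hx)).continuousAt.continuousWithinAt)
    fun x hx ↦ ?_
  rw [interior_Ioi] at hx
  rw [(hasDerivAt_poissonEntropy hx.ne').deriv]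
  calc 0 < exp (-x) := exp_pos _
    _ = exp (-x) * (exp x * log x + 1) - log x := by
      rw [mul_add, ← mul_assoc, ← exp_add]; simp
    _ ≤ exp (-x) * egf (fun i ↦ log (i + 1 : ℝ)) x - log x := by
      gcongr; exact exp_mul_log_add_one_le_egf_log_succ hx
end
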